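/- The polynomial F(x,y) = x²(3-y) - (y-2)²(y+1) is irreducible over ℝ (equivalently over ℂ as a polynomial in two variables), so the carpenter's square curve is an irreducible cubic algebraic curve. -/
import Mathlib


open MvPolynomial

/-- The defining polynomial `x²(3 - y) - (y - 2)²(y + 1)` of the carpenter's square curve,
as a polynomial in two variables over `ℝ` (variable `0` is `x`, variable `1` is `y`). -/
noncomputable def carpSquarePoly : MvPolynomial (Fin 2) ℝ :=
  (X 0) ^ 2 * (C 3 - X 1) - (X 1 - C 2) ^ 2 * (X 1 + C 1)

noncomputable def carpE : MvPolynomial (Fin 2) ℝ ≃ₐ[ℝ] Polynomial (Polynomial ℝ) :=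
  (MvPolynomial.finSuccEquiv ℝ 1).trans <| Polynomial.mapAlgEquiv <|
    (MvPolynomial.finSuccEquiv ℝ 0).trans <|
      Polynomial.mapAlgEquiv (MvPolynomial.isEmptyAlgEquiv ℝ (Fin 0))

noncomputable def carpP : Polynomial (Polynomial ℝ) :=
  Polynomial.C (Polynomial.C 3 - Polynomial.X) * Polynomial.X ^ 2 -
    Polynomial.C ((Polynomial.X - Polynomial.C 2) ^ 2 * (Polynomial.X + Polynomial.C 1))

lemma carpE_X0 : carpE (X 0) = Polynomial.X := by
  simp only [carpE, AlgEquiv.trans_apply, finSuccEquiv_X_zero, Polynomial.coe_mapAlgEquiv,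
    Polynomial.map_X]

lemma carpE_X1 : carpE (X 1) = Polynomial.C Polynomial.X := by
  have h1 : (1 : Fin 2) = (0 : Fin 1).succ := rfl
  simp only [carpE, AlgEquiv.trans_apply, h1, finSuccEquiv_X_succ, Polynomial.coe_mapAlgEquiv,
    Polynomial.map_C, finSuccEquiv_X_zero, Polynomial.map_X]
  congr 1
  show ((MvPolynomial.finSuccEquiv ℝ 0).trans
      (Polynomial.mapAlgEquiv (isEmptyAlgEquiv ℝ (Fin 0)))) (X 0) = Polynomial.X
  simp only [AlgEquiv.trans_apply, finSuccEquiv_X_zero, Polynomial.coe_mapAlgEquiv,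
    Polynomial.map_X]

lemma carpE_C (r : ℝ) : carpE (C r) = Polynomial.C (Polynomial.C r) := by
  have h : (C r : MvPolynomial (Fin 2) ℝ) = algebraMap ℝ _ r := rfl
  rw [h, AlgEquiv.commutes]
  rfl

lemma carpE_apply : carpE carpSquarePoly = carpP := by
  simp only [carpSquarePoly, map_sub, map_add, map_mul, map_pow, carpE_X0, carpE_X1, carpE_C,
    carpP, map_sub, map_add, map_mul, map_pow]
  ring

private lemma quad_coeff (A B D : Polynomial ℝ) :
    (Polynomial.C A * Polynomial.X ^ 2 + Polynomial.C B * Polynomial.X +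
        Polynomial.C D).coeff 2 = A ∧
    (Polynomial.C A * Polynomial.X ^ 2 + Polynomial.C B * Polynomial.X +
        Polynomial.C D).coeff 1 = B ∧
    (Polynomial.C A * Polynomial.X ^ 2 + Polynomial.C B * Polynomial.X +
        Polynomial.C D).coeff 0 = D := by
  refine ⟨?_, ?_, ?_⟩ <;>
    simp [Polynomial.coeff_add, Polynomial.coeff_C_mul, Polynomial.coeff_X_pow,
      Polynomial.coeff_C]

private lemma quad_eq {A B D A' B' D' : Polynomial ℝ}
    (h : Polynomial.C A * Polynomial.X ^ 2 + Polynomial.C B * Polynomial.X + Polynomial.C D =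
      Polynomial.C A' * Polynomial.X ^ 2 + Polynomial.C B' * Polynomial.X + Polynomial.C D') :
    A = A' ∧ B = B' ∧ D = D' := by
  refine ⟨?_, ?_, ?_⟩
  · have := congrArg (fun p => Polynomial.coeff p 2) h
    simpa [(quad_coeff A B D).1, (quad_coeff A' B' D').1] using this
  · have := congrArg (fun p => Polynomial.coeff p 1) h
    simpa [(quad_coeff A B D).2.1, (quad_coeff A' B' D').2.1] using this
  · have := congrArg (fun p => Polynomial.coeff p 0) h
    simpa [(quad_coeff A B D).2.2, (quad_coeff A' B' D').2.2] using this

lemma carpP_irreducible : Irreducible carpP := by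
  have hquad : carpP = Polynomial.C (Polynomial.C 3 - Polynomial.X) * Polynomial.X ^ 2 +
      Polynomial.C 0 * Polynomial.X +
      Polynomial.C (-((Polynomial.X - Polynomial.C 2) ^ 2 * (Polynomial.X + Polynomial.C 1))) := by
    simp only [carpP, map_neg, map_zero]
    ring
  have key : ∀ r : Polynomial ℝ, Polynomial.C r ∣ carpP → IsUnit r := by
    intro r hr
    rw [Polynomial.C_dvd_iff_dvd_coeff] at hr
    have h2 := hr 2
    have h0 := hr 0
    rw [hquad] at h2 h0
    rw [(quad_coeff _ _ _).1] at h2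
    rw [(quad_coeff _ _ _).2.2] at h0
    have hdvd : r ∣ Polynomial.C 4 := by
      have hid : (Polynomial.C 4 : Polynomial ℝ) =
          Polynomial.X ^ 2 * (Polynomial.C 3 - Polynomial.X) +
          (Polynomial.X - Polynomial.C 2) ^ 2 * (Polynomial.X + Polynomial.C 1) := by
        simp only [map_ofNat, map_one, Polynomial.C_1]
        ring
      rw [hid]
      exact dvd_add (h2.mul_left _) (dvd_neg.mp h0)
    exact isUnit_of_dvd_unit hdvd (Polynomial.isUnit_C.mpr (by norm_num))
  have ha : (Polynomial.C 3 - Polynomial.X : Polynomial ℝ) ≠ 0 := by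
    intro h
    have := congrArg (Polynomial.eval 0) h
    norm_num at this
  have hdeg : carpP.natDegree = 2 := by
    unfold carpP
    compute_degree!
  constructor
  · intro hu
    have := Polynomial.natDegree_eq_zero_of_isUnit hu
    omega
  · rintro f g hfg
    by_contra hcon
    push_neg at hcon
    obtain ⟨hf, hg⟩ := hcon
    have hP0 : carpP ≠ 0 := fun h => by simp [h] at hdeg
    have hf0 : f ≠ 0 := fun h => hP0 (by simp [hfg, h])
    have hg0 : g ≠ 0 := fun h => hP0 (by simp [hfg, h])
    have hsum : f.natDegree + g.natDegree = 2 := by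
      rw [← Polynomial.natDegree_mul hf0 hg0, ← hfg, hdeg]
    have hne0 : ∀ p q : Polynomial (Polynomial ℝ), carpP = p * q → ¬IsUnit p →
        p.natDegree ≠ 0 := by
      intro p q h hp hdp
      have hpc : p = Polynomial.C (p.coeff 0) := Polynomial.eq_C_of_natDegree_eq_zero hdp
      apply hp
      rw [hpc, Polynomial.isUnit_C]
      exact key _ (hpc ▸ ⟨q, h⟩)
    have hfd : f.natDegree = 1 := by
      have h1 := hne0 f g hfg hf
      have h2 := hne0 g f (by rw [hfg, mul_comm]) hg
      omega
    have hgd : g.natDegree = 1 := by omega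
    set b := f.coeff 1 with hb
    set d := f.coeff 0 with hd
    set e := g.coeff 1 with he
    set h := g.coeff 0 with hh
    have hfe : f = Polynomial.C b * Polynomial.X + Polynomial.C d :=
      Polynomial.eq_X_add_C_of_natDegree_le_one (le_of_eq hfd)
    have hge : g = Polynomial.C e * Polynomial.X + Polynomial.C h :=
      Polynomial.eq_X_add_C_of_natDegree_le_one (le_of_eq hgd)
    rw [hfe, hge] at hfg
    have hprod : (Polynomial.C b * Polynomial.X + Polynomial.C d) *
        (Polynomial.C e * Polynomial.X + Polynomial.C h) =
        Polynomial.C (b * e) * Polynomial.X ^ 2 + Polynomial.C (b * h + d * e) * Polynomial.X +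
          Polynomial.C (d * h) := by
      simp only [map_mul, map_add]
      ring
    rw [hprod, hquad] at hfg
    obtain ⟨e2, e1, e0⟩ := quad_eq hfg
    have e2 : b * e = Polynomial.C 3 - Polynomial.X := e2.symm
    have e1 : b * h + d * e = 0 := e1.symm
    have e0 : d * h =
        -((Polynomial.X - Polynomial.C 2) ^ 2 * (Polynomial.X + Polynomial.C 1)) := e0.symm
    have hsq : (d * e) ^ 2 =
        (Polynomial.X - Polynomial.C 2) ^ 2 * (Polynomial.X + Polynomial.C 1) *
          (Polynomial.C 3 - Polynomial.X) := by
      calc (d * e) ^ 2 = -((d * h) * (b * e)) + (d * e) * (b * h + d * e) := by ring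
        _ = _ := by rw [e0, e2, e1]; ring
    have hrhs_ne : (Polynomial.X - Polynomial.C 2) ^ 2 * (Polynomial.X + Polynomial.C 1) *
        (Polynomial.C 3 - Polynomial.X) ≠ (0 : Polynomial ℝ) := by
      intro hz
      have := congrArg (Polynomial.eval 0) hz
      norm_num at this
    have hde : d * e ≠ 0 := by
      intro hz
      exact hrhs_ne (by linear_combination (-1 : Polynomial ℝ) * hsq + (d * e) * hz)
    have m1 : Polynomial.rootMultiplicity (-1)
        (((Polynomial.X - Polynomial.C 2) ^ 2 : Polynomial ℝ)) = 0 := by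
      apply Polynomial.rootMultiplicity_eq_zero
      intro hroot
      norm_num [Polynomial.IsRoot] at hroot
    have m2 : Polynomial.rootMultiplicity (-1)
        ((Polynomial.X + Polynomial.C 1 : Polynomial ℝ)) = 1 := by
      have hx : (Polynomial.X + Polynomial.C 1 : Polynomial ℝ)
          = Polynomial.X - Polynomial.C (-1) := by
        simp [sub_neg_eq_add]
      rw [hx, Polynomial.rootMultiplicity_X_sub_C_self]
    have m3 : Polynomial.rootMultiplicity (-1)
        ((Polynomial.C 3 - Polynomial.X : Polynomial ℝ)) = 0 := by
      apply Polynomial.rootMultiplicity_eq_zero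
      intro hroot
      norm_num [Polynomial.IsRoot] at hroot
    have mR : Polynomial.rootMultiplicity (-1)
        (((Polynomial.X - Polynomial.C 2) ^ 2 * (Polynomial.X + Polynomial.C 1) *
          (Polynomial.C 3 - Polynomial.X) : Polynomial ℝ)) = 1 := by
      have hAB : (Polynomial.X - Polynomial.C 2) ^ 2 * (Polynomial.X + Polynomial.C 1) ≠
          (0 : Polynomial ℝ) := fun hz => hrhs_ne (by rw [hz, zero_mul])
      rw [Polynomial.rootMultiplicity_mul hrhs_ne, Polynomial.rootMultiplicity_mul hAB,
        m1, m2, m3]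
    have hm : 2 * Polynomial.rootMultiplicity (-1) (d * e) = 1 := by
      rw [← mR, ← hsq, pow_two, Polynomial.rootMultiplicity_mul (mul_ne_zero hde hde), two_mul]
    omega

/-- The carpenter's square curve is an irreducible cubic: its defining polynomial is
irreducible in `ℝ[x, y]`. -/
theorem carpSquarePoly_irreducible : Irreducible carpSquarePoly := by
  rw [← MulEquiv.irreducible_iff carpE.toMulEquiv]
  show Irreducible (carpE carpSquarePoly)
  rw [carpE_apply]
  exact carpP_irreducible
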